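/- For each i ∈ {1, 3, 5} there exists a sequence of nonnegative reals c₀, c₁, c₂, … such that for every complex t with |t| < 2−√3 one has a_i(t) = ∑_{k=0}^∞ (−1)^k·c_k·t^{2k+1}, the series converging absolutely. In particular the Maclaurin coefficients of each a_i alternate in sign, and the series converge absolutely for |βJ| < arctan(2−√3) = π/12 when t = tanh(βJ). -/

import Mathlib

open scoped BigOperators

/-- Coefficient `a₁(t)` for complex `t`. -/
noncomputable def a1C (t : ℂ) : ℂ :=
  t * (1 + 16 * t ^ 2 + 46 * t ^ 4 + 16 * t ^ 6 + t ^ 8) /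
    ((1 + t ^ 2) * (1 + 6 * t ^ 2 + t ^ 4) * (1 + 14 * t ^ 2 + t ^ 4))

/-- Coefficient `a₃(t)` for complex `t`. -/
noncomputable def a3C (t : ℂ) : ℂ :=
  -2 * t ^ 3 / ((1 + t ^ 2) * (1 + 14 * t ^ 2 + t ^ 4))

/-- Coefficient `a₅(t)` for complex `t`. -/
noncomputable def a5C (t : ℂ) : ℂ :=
  16 * t ^ 5 / ((1 + t ^ 2) * (1 + 6 * t ^ 2 + t ^ 4) * (1 + 14 * t ^ 2 + t ^ 4))

/-! Partial fractions in `s = t²`. With `v = 1 + √2` and `u = 2 + √3` one has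
`1 + 6s + s² = (1 + v²s)(1 + v⁻²s)` and `1 + 14s + s² = (1 + u²s)(1 + u⁻²s)`, and each `aᵢ(t)` is a
real combination `A t/(1+s) + B t(1+s)/(1+6s+s²) + C t(1+s)/(1+14s+s²)`. Expanding the five
factors `1/(1 + γs)` geometrically, the coefficient of `(-1)ᵏ t^(2k+1)` is
`A + B Rᵥ(2k+1) + C Rᵤ(2k+1)` with `R_w(n) = (wⁿ + w⁻ⁿ)/(w + w⁻¹) ≥ 1`, and all five series converge
once `u|t| < 1`, i.e. `|t| < 2 - √3`. Nonnegativity is immediate for `a₁` and `a₃`; for `a₅` the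
first two coefficients vanish and afterwards `uⁿ ≥ 7vⁿ` makes the `C`-term dominate. For
`t = tanh K` one uses `|tanh K| ≤ |K| < π/12 < 2 - √3`. -/

open Real

noncomputable def altOddTerm (c : ℕ → ℝ) (t : ℂ) (k : ℕ) : ℂ :=
  (-1) ^ k * (c k : ℂ) * t ^ (2 * k + 1)

lemma one_add_mul_sq_ne_zero {γ : ℝ} {t : ℂ} (h : |γ| * ‖t‖ ^ 2 < 1) : 1 + γ * t ^ 2 ≠ 0 := by
  intro h0
  have : ‖(γ : ℂ) * t ^ 2‖ = 1 := by rw [eq_neg_of_add_eq_zero_right h0, norm_neg, norm_one]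
  rw [norm_mul, norm_pow, Complex.norm_real, norm_eq_abs] at this
  exact h.ne this

lemma hasSum_altOddTerm_geometric {γ : ℝ} {t : ℂ} (h : |γ| * ‖t‖ ^ 2 < 1) :
    HasSum (altOddTerm (γ ^ ·) t) (t / (1 + γ * t ^ 2)) := by
  have hr : ‖-(γ : ℂ) * t ^ 2‖ < 1 := by
    rwa [norm_mul, norm_neg, norm_pow, Complex.norm_real, norm_eq_abs]
  have hterm : altOddTerm (γ ^ ·) t = fun k => t * (-(γ : ℂ) * t ^ 2) ^ k := by
    funext k
    simp only [altOddTerm]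
    push_cast
    ring
  rw [hterm, div_eq_mul_inv, ← neg_neg ((γ : ℂ) * t ^ 2), ← neg_mul, ← sub_eq_add_neg]
  exact (hasSum_geometric_of_norm_lt_one hr).mul_left t

lemma sq_mul_norm_sq_lt_one {w : ℝ} (hw : 1 ≤ w) {t : ℂ} (ht : w * ‖t‖ < 1) :
    |w ^ 2| * ‖t‖ ^ 2 < 1 ∧ |w⁻¹ ^ 2| * ‖t‖ ^ 2 < 1 := by
  have hw₀ : 0 < w := zero_lt_one.trans_le hw
  have key {x : ℝ} (hx : 0 ≤ x) (hxt : x * ‖t‖ < 1) : |x ^ 2| * ‖t‖ ^ 2 < 1 := by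
    rw [abs_of_nonneg (by positivity), ← mul_pow]
    exact pow_lt_one₀ (by positivity) hxt two_ne_zero
  refine ⟨key hw₀.le ht, key (inv_nonneg.2 hw₀.le) ?_⟩
  exact (mul_le_mul_of_nonneg_right ((inv_le_one_of_one_le₀ hw).trans hw) (norm_nonneg t)).trans_lt ht

lemma pair_partial_fraction {K : Type*} [Field K] {x y t : K} (hxy : x * y = 1)
    (hx : 1 + x ^ 2 * t ^ 2 ≠ 0) (hy : 1 + y ^ 2 * t ^ 2 ≠ 0) (h : x + y ≠ 0) :
    x / (x + y) * (t / (1 + x ^ 2 * t ^ 2)) + y / (x + y) * (t / (1 + y ^ 2 * t ^ 2)) =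
      t * (1 + t ^ 2) / ((1 + x ^ 2 * t ^ 2) * (1 + y ^ 2 * t ^ 2)) := by
  rw [div_mul_div_comm, div_mul_div_comm, div_add_div _ _ (mul_ne_zero h hx) (mul_ne_zero h hy),
    div_eq_div_iff (mul_ne_zero (mul_ne_zero h hx) (mul_ne_zero h hy)) (mul_ne_zero hx hy)]
  linear_combination (t ^ 3 * (x + y) ^ 2 * (1 + x ^ 2 * t ^ 2) * (1 + y ^ 2 * t ^ 2)) * hxy

lemma quartic_eq_mul {w : ℝ} (hw : w ≠ 0) (t : ℂ) :
    1 + ((w ^ 2 + w⁻¹ ^ 2 : ℝ) : ℂ) * t ^ 2 + t ^ 4 =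
      (1 + ((w ^ 2 : ℝ) : ℂ) * t ^ 2) * (1 + ((w⁻¹ ^ 2 : ℝ) : ℂ) * t ^ 2) := by
  have hW : (w : ℂ) * (w : ℂ)⁻¹ = 1 := mul_inv_cancel₀ (Complex.ofReal_ne_zero.2 hw)
  push_cast
  linear_combination (-(t ^ 4) * ((w : ℂ) * (w : ℂ)⁻¹ + 1)) * hW

lemma quartic_ne_zero {w : ℝ} (hw : 1 ≤ w) {t : ℂ} (ht : w * ‖t‖ < 1) :
    1 + ((w ^ 2 + w⁻¹ ^ 2 : ℝ) : ℂ) * t ^ 2 + t ^ 4 ≠ 0 := by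
  obtain ⟨hw_sq, hinv_sq⟩ := sq_mul_norm_sq_lt_one hw ht
  rw [quartic_eq_mul (zero_lt_one.trans_le hw).ne']
  exact mul_ne_zero (one_add_mul_sq_ne_zero hw_sq) (one_add_mul_sq_ne_zero hinv_sq)

noncomputable def lucasRatio (w : ℝ) (n : ℕ) : ℝ := (w ^ n + w⁻¹ ^ n) / (w + w⁻¹)

lemma lucasRatio_one {w : ℝ} (hw : 0 < w) : lucasRatio w 1 = 1 := by
  rw [lucasRatio, pow_one, pow_one, div_self (by positivity)]

lemma lucasRatio_three {w : ℝ} (hw : 0 < w) : lucasRatio w 3 = w ^ 2 + w⁻¹ ^ 2 - 1 := by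
  rw [lucasRatio, div_eq_iff (by positivity)]
  linear_combination (-(w + w⁻¹)) * mul_inv_cancel₀ hw.ne'

lemma one_le_lucasRatio {w : ℝ} (hw : 1 ≤ w) {n : ℕ} (hn : 1 ≤ n) : 1 ≤ lucasRatio w n := by
  have hw₀ : 0 < w := zero_lt_one.trans_le hw
  obtain ⟨m, rfl⟩ := Nat.exists_eq_add_of_le' hn
  rw [lucasRatio, one_le_div (by positivity)]
  have hfactor :
      w ^ (m + 1) + w⁻¹ ^ (m + 1) - (w + w⁻¹) = (w ^ m - 1) * (w - w⁻¹ ^ (m + 1)) := by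
    rw [inv_pow]; field_simp; ring
  have h1 : 1 ≤ w ^ m := one_le_pow₀ hw
  have h2 : w⁻¹ ^ (m + 1) ≤ w :=
    (pow_le_one₀ (inv_nonneg.2 hw₀.le) (inv_le_one_of_one_le₀ hw)).trans hw
  nlinarith [mul_nonneg (sub_nonneg.2 h1) (sub_nonneg.2 h2)]

lemma pow_div_le_lucasRatio {w : ℝ} (hw : 0 < w) (n : ℕ) : w ^ n / (w + w⁻¹) ≤ lucasRatio w n := by
  rw [lucasRatio]
  gcongr
  exact le_add_of_nonneg_right (by positivity)

lemma lucasRatio_mul_le {w : ℝ} (hw : 1 ≤ w) (n : ℕ) : lucasRatio w n * (w + w⁻¹) ≤ w ^ n + 1 := by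
  have hw₀ : 0 < w := zero_lt_one.trans_le hw
  rw [lucasRatio, div_mul_cancel₀ _ (by positivity)]
  gcongr
  exact pow_le_one₀ (inv_nonneg.2 hw₀.le) (inv_le_one_of_one_le₀ hw)

lemma hasSum_altOddTerm_lucasRatio {w : ℝ} (hw : 1 ≤ w) {t : ℂ} (ht : w * ‖t‖ < 1) :
    HasSum (altOddTerm (fun k => lucasRatio w (2 * k + 1)) t)
      (t * (1 + t ^ 2) / (1 + ((w ^ 2 + w⁻¹ ^ 2 : ℝ) : ℂ) * t ^ 2 + t ^ 4)) := by
  have hw₀ : 0 < w := zero_lt_one.trans_le hw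
  obtain ⟨hw_sq, hinv_sq⟩ := sq_mul_norm_sq_lt_one hw ht
  set W : ℂ := (w : ℂ) with hW_def
  have hs := ((hasSum_altOddTerm_geometric hw_sq).mul_left (W / (W + W⁻¹))).add
    ((hasSum_altOddTerm_geometric hinv_sq).mul_left (W⁻¹ / (W + W⁻¹)))
  have hterm : altOddTerm (fun k => lucasRatio w (2 * k + 1)) t = fun k =>
      W / (W + W⁻¹) * altOddTerm ((w ^ 2) ^ ·) t k +
        W⁻¹ / (W + W⁻¹) * altOddTerm ((w⁻¹ ^ 2) ^ ·) t k := by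
    funext k
    simp only [altOddTerm, lucasRatio]
    push_cast
    ring
  have hW : W ≠ 0 := Complex.ofReal_ne_zero.2 hw₀.ne'
  have hsum : W + W⁻¹ ≠ 0 := by
    rw [hW_def]; exact_mod_cast (by positivity : 0 < w + w⁻¹).ne'
  have hw_ne := one_add_mul_sq_ne_zero hw_sq
  have hinv_ne := one_add_mul_sq_ne_zero hinv_sq
  rw [hterm, quartic_eq_mul hw₀.ne']
  push_cast at hw_ne hinv_ne hs ⊢
  rw [← pair_partial_fraction (mul_inv_cancel₀ hW) hw_ne hinv_ne hsum]
  exact hs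

lemma inv_one_add_sqrt_two : (1 + √2)⁻¹ = √2 - 1 :=
  inv_eq_of_mul_eq_one_right (by linear_combination sq_sqrt (zero_le_two : (0 : ℝ) ≤ 2))

lemma inv_two_add_sqrt_three : (2 + √3)⁻¹ = 2 - √3 :=
  inv_eq_of_mul_eq_one_right (by linear_combination -sq_sqrt (by norm_num : (0 : ℝ) ≤ 3))

lemma one_add_sqrt_two_add_inv : (1 + √2) + (1 + √2)⁻¹ = 2 * √2 := by
  rw [inv_one_add_sqrt_two]; ring

lemma two_add_sqrt_three_add_inv : (2 + √3) + (2 + √3)⁻¹ = 4 := by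
  rw [inv_two_add_sqrt_three]; ring

lemma one_add_sqrt_two_sq_add_inv_sq : (1 + √2) ^ 2 + (1 + √2)⁻¹ ^ 2 = 6 := by
  rw [inv_one_add_sqrt_two]; linear_combination 2 * sq_sqrt (zero_le_two : (0 : ℝ) ≤ 2)

lemma two_add_sqrt_three_sq_add_inv_sq : (2 + √3) ^ 2 + (2 + √3)⁻¹ ^ 2 = 14 := by
  rw [inv_two_add_sqrt_three]; linear_combination 2 * sq_sqrt (by norm_num : (0 : ℝ) ≤ 3)

lemma one_le_one_add_sqrt_two : 1 ≤ 1 + √2 := le_add_of_nonneg_right (sqrt_nonneg 2)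

lemma one_add_sqrt_two_le : 1 + √2 ≤ 2 + √3 := by
  have := sqrt_le_sqrt (by norm_num : (2 : ℝ) ≤ 3)
  linarith

lemma one_le_two_add_sqrt_three : 1 ≤ 2 + √3 := one_le_one_add_sqrt_two.trans one_add_sqrt_two_le

lemma mul_norm_lt_one {t : ℂ} (ht : ‖t‖ < 2 - √3) {w : ℝ} (hw : w ≤ 2 + √3) : w * ‖t‖ < 1 :=
  calc w * ‖t‖ ≤ (2 + √3) * ‖t‖ := mul_le_mul_of_nonneg_right hw (norm_nonneg t)
    _ < (2 + √3) * (2 - √3) := mul_lt_mul_of_pos_left ht (by positivity)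
    _ = 1 := by linear_combination -sq_sqrt (by norm_num : (0 : ℝ) ≤ 3)

noncomputable def partialFractionCoeff (A B C : ℝ) (k : ℕ) : ℝ :=
  A + B * lucasRatio (1 + √2) (2 * k + 1) + C * lucasRatio (2 + √3) (2 * k + 1)

noncomputable def partialFractionSum (A B C : ℝ) (t : ℂ) : ℂ :=
  A * (t / (1 + t ^ 2)) + B * (t * (1 + t ^ 2) / (1 + 6 * t ^ 2 + t ^ 4)) +
    C * (t * (1 + t ^ 2) / (1 + 14 * t ^ 2 + t ^ 4))

lemma hasSum_partialFraction (A B C : ℝ) {t : ℂ} (ht : ‖t‖ < 2 - √3) :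
    HasSum (altOddTerm (partialFractionCoeff A B C) t) (partialFractionSum A B C t) := by
  have hv := hasSum_altOddTerm_lucasRatio one_le_one_add_sqrt_two
    (mul_norm_lt_one ht one_add_sqrt_two_le)
  have hu := hasSum_altOddTerm_lucasRatio one_le_two_add_sqrt_three (mul_norm_lt_one ht le_rfl)
  rw [one_add_sqrt_two_sq_add_inv_sq] at hv
  rw [two_add_sqrt_three_sq_add_inv_sq] at hu
  have h1 := (sq_mul_norm_sq_lt_one le_rfl (mul_norm_lt_one ht one_le_two_add_sqrt_three)).1
  have hs := (((hasSum_altOddTerm_geometric h1).mul_left (A : ℂ)).add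
    (hv.mul_left (B : ℂ))).add (hu.mul_left (C : ℂ))
  have hterm : altOddTerm (partialFractionCoeff A B C) t = fun k =>
      A * altOddTerm (((1 : ℝ) ^ 2) ^ ·) t k +
        B * altOddTerm (fun k => lucasRatio (1 + √2) (2 * k + 1)) t k +
        C * altOddTerm (fun k => lucasRatio (2 + √3) (2 * k + 1)) t k := by
    funext k
    simp only [altOddTerm, partialFractionCoeff, one_pow]
    push_cast
    ring
  rw [hterm]
  simpa [partialFractionSum] using hs

lemma partialFractionCoeff_nonneg {A B C : ℝ} (hB : 0 ≤ B) (hC : 0 ≤ C) (hAC : 0 ≤ A + C)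
    (k : ℕ) : 0 ≤ partialFractionCoeff A B C k := by
  have hv := one_le_lucasRatio one_le_one_add_sqrt_two (Nat.le_add_left 1 (2 * k))
  have hu := one_le_lucasRatio one_le_two_add_sqrt_three (Nat.le_add_left 1 (2 * k))
  unfold partialFractionCoeff
  nlinarith

lemma partialFractionCoeff_a5C_nonneg (k : ℕ) :
    0 ≤ partialFractionCoeff (1 / 3) (-1 / 2) (1 / 6) k := by
  have hv₀ : 0 < 1 + √2 := by positivity
  have hu₀ : 0 < 2 + √3 := by positivity
  match k with
  | 0 =>
    norm_num [partialFractionCoeff, lucasRatio_one hv₀, lucasRatio_one hu₀]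
  | 1 =>
    simp only [partialFractionCoeff]
    rw [lucasRatio_three hv₀, lucasRatio_three hu₀, one_add_sqrt_two_sq_add_inv_sq,
      two_add_sqrt_three_sq_add_inv_sq]
    norm_num
  | k + 2 =>
    set n := 2 * (k + 2) + 1
    have hRu := pow_div_le_lucasRatio hu₀ n
    have hRv := lucasRatio_mul_le one_le_one_add_sqrt_two n
    rw [two_add_sqrt_three_add_inv] at hRu
    rw [one_add_sqrt_two_add_inv] at hRv
    have hRv₀ : 0 ≤ lucasRatio (1 + √2) n :=
      zero_le_one.trans (one_le_lucasRatio one_le_one_add_sqrt_two (by omega))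
    have h2 : (1.4 : ℝ) ≤ √2 := le_sqrt_of_sq_le (by norm_num)
    have h2' : √2 ≤ 1.42 := (sqrt_le_left (by norm_num)).2 (by norm_num)
    have h3 : (1.7 : ℝ) ≤ √3 := le_sqrt_of_sq_le (by norm_num)
    have hratio : 7 * (1 + √2) ^ n ≤ (2 + √3) ^ n :=
      calc 7 * (1 + √2) ^ n ≤ (3 / 2) ^ n * (1 + √2) ^ n := by
            gcongr
            calc (7 : ℝ) ≤ (3 / 2) ^ 5 := by norm_num
              _ ≤ (3 / 2) ^ n := pow_le_pow_right₀ (by norm_num) (by omega)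
        _ = (3 / 2 * (1 + √2)) ^ n := (mul_pow _ _ _).symm
        _ ≤ (2 + √3) ^ n := by gcongr; linarith
    unfold partialFractionCoeff
    nlinarith [mul_le_mul_of_nonneg_left h2 hRv₀]

lemma denominator_ne_zero {t : ℂ} (ht : ‖t‖ < 2 - √3) :
    (1 + t ^ 2) * (1 + 6 * t ^ 2 + t ^ 4) * (1 + 14 * t ^ 2 + t ^ 4) ≠ 0 := by
  have h1 : 1 + t ^ 2 ≠ 0 := by
    simpa using one_add_mul_sq_ne_zero
      (sq_mul_norm_sq_lt_one le_rfl (mul_norm_lt_one ht one_le_two_add_sqrt_three)).1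
  have h6 := quartic_ne_zero one_le_one_add_sqrt_two (mul_norm_lt_one ht one_add_sqrt_two_le)
  have h14 := quartic_ne_zero one_le_two_add_sqrt_three (mul_norm_lt_one ht le_rfl)
  rw [one_add_sqrt_two_sq_add_inv_sq] at h6
  rw [two_add_sqrt_three_sq_add_inv_sq] at h14
  push_cast at h6 h14
  exact mul_ne_zero (mul_ne_zero h1 h6) h14

lemma partialFractionSum_eq {t : ℂ}
    (h : (1 + t ^ 2) * (1 + 6 * t ^ 2 + t ^ 4) * (1 + 14 * t ^ 2 + t ^ 4) ≠ 0) (A B C : ℝ) :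
    partialFractionSum A B C t =
      t * (A * (1 + 6 * t ^ 2 + t ^ 4) * (1 + 14 * t ^ 2 + t ^ 4) +
        (1 + t ^ 2) ^ 2 * (B * (1 + 14 * t ^ 2 + t ^ 4) + C * (1 + 6 * t ^ 2 + t ^ 4))) /
      ((1 + t ^ 2) * (1 + 6 * t ^ 2 + t ^ 4) * (1 + 14 * t ^ 2 + t ^ 4)) := by
  obtain ⟨⟨h1, h6⟩, h14⟩ := mul_ne_zero_iff.1 h |>.imp_left mul_ne_zero_iff.1
  rw [partialFractionSum, eq_div_iff h]
  generalize 1 + 6 * t ^ 2 + t ^ 4 = D6 at *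
  generalize 1 + 14 * t ^ 2 + t ^ 4 = D14 at *
  field_simp
  ring

lemma a1C_eq_partialFractionSum {t : ℂ}
    (h : (1 + t ^ 2) * (1 + 6 * t ^ 2 + t ^ 4) * (1 + 14 * t ^ 2 + t ^ 4) ≠ 0) :
    a1C t = partialFractionSum (1 / 3) (1 / 2) (1 / 6) t := by
  rw [partialFractionSum_eq h, a1C]
  push_cast
  ring

lemma a3C_eq_partialFractionSum {t : ℂ}
    (h : (1 + t ^ 2) * (1 + 6 * t ^ 2 + t ^ 4) * (1 + 14 * t ^ 2 + t ^ 4) ≠ 0) :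
    a3C t = partialFractionSum (-1 / 6) 0 (1 / 6) t := by
  have h6 : 1 + 6 * t ^ 2 + t ^ 4 ≠ 0 := right_ne_zero_of_mul (left_ne_zero_of_mul h)
  rw [partialFractionSum_eq h, a3C, ← mul_div_mul_right _ _ h6]
  push_cast
  ring

lemma a5C_eq_partialFractionSum {t : ℂ}
    (h : (1 + t ^ 2) * (1 + 6 * t ^ 2 + t ^ 4) * (1 + 14 * t ^ 2 + t ^ 4) ≠ 0) :
    a5C t = partialFractionSum (1 / 3) (-1 / 2) (1 / 6) t := by
  rw [partialFractionSum_eq h, a5C]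
  push_cast
  ring

lemma sinh_le_mul_cosh {x : ℝ} (hx : 0 ≤ x) : sinh x ≤ x * cosh x := by
  have hderiv (y : ℝ) : HasDerivAt (fun y => y * cosh y - sinh y) (y * sinh y) y := by
    have h := ((hasDerivAt_id' y).mul (hasDerivAt_cosh y)).sub (hasDerivAt_sinh y)
    rwa [one_mul, add_sub_cancel_left] at h
  have hmono : MonotoneOn (fun y => y * cosh y - sinh y) (Set.Ici 0) :=
    monotoneOn_of_hasDerivWithinAt_nonneg (convex_Ici 0)
      (fun y _ => (hderiv y).continuousAt.continuousWithinAt)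
      (fun y _ => (hderiv y).hasDerivWithinAt)
      (fun y hy => mul_nonneg (interior_subset hy) (sinh_nonneg_iff.2 (interior_subset hy)))
  have := hmono Set.self_mem_Ici hx hx
  simp only [zero_mul, sinh_zero, sub_zero] at this
  linarith

lemma abs_tanh_le_abs (x : ℝ) : |tanh x| ≤ |x| := by
  rw [tanh_eq_sinh_div_cosh, abs_div, abs_sinh, abs_of_pos (cosh_pos x),
    div_le_iff₀ (cosh_pos x), ← cosh_abs x]
  exact sinh_le_mul_cosh (abs_nonneg x)

lemma tan_pi_div_twelve : tan (π / 12) = 2 - √3 := by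
  rw [show π / 12 = π / 3 - π / 4 by ring, tan_eq_sin_div_cos, sin_sub, cos_sub,
    sin_pi_div_three, cos_pi_div_three, sin_pi_div_four, cos_pi_div_four,
    div_eq_iff (by positivity)]
  linear_combination (√2 / 4) * sq_sqrt (by norm_num : (0 : ℝ) ≤ 3)

lemma arctan_two_sub_sqrt_three : arctan (2 - √3) = π / 12 := by
  rw [← tan_pi_div_twelve, arctan_tan] <;> linarith [pi_pos]

lemma norm_tanh_lt {K : ℝ} (hK : |K| < arctan (2 - √3)) : ‖((tanh K : ℝ) : ℂ)‖ < 2 - √3 := by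
  have hsqrt : √3 < 1.7321 := (sqrt_lt' (by norm_num)).2 (by norm_num)
  rw [Complex.norm_real, norm_eq_abs]
  calc |tanh K| ≤ |K| := abs_tanh_le_abs K
    _ < π / 12 := arctan_two_sub_sqrt_three ▸ hK
    _ < 2 - √3 := by linarith [pi_lt_d2]

/-- each of `a₁`, `a₃`, `a₅` has a Maclaurin series
`∑ₖ (−1)ᵏ cₖ t^(2k+1)` with nonnegative `cₖ` (alternating signs), converging absolutely
for `|t| < 2 − √3`; in particular the series converge absolutely for
`|βJ| < arctan (2 − √3) = π/12` when `t = tanh (βJ)`. -/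
theorem alternating_maclaurin_series (a : ℂ → ℂ) (ha : a = a1C ∨ a = a3C ∨ a = a5C) :
    Real.arctan (2 - Real.sqrt 3) = Real.pi / 12 ∧
    ∃ c : ℕ → ℝ, (∀ k, 0 ≤ c k) ∧
      (∀ t : ℂ, ‖t‖ < 2 - Real.sqrt 3 →
        (Summable fun k : ℕ => ‖((-1) ^ k * (c k : ℂ)) * t ^ (2 * k + 1)‖) ∧
        HasSum (fun k : ℕ => ((-1) ^ k * (c k : ℂ)) * t ^ (2 * k + 1)) (a t)) ∧
      (∀ K : ℝ, |K| < Real.arctan (2 - Real.sqrt 3) →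
        (Summable fun k : ℕ =>
          ‖((-1) ^ k * (c k : ℂ)) * ((Real.tanh K : ℝ) : ℂ) ^ (2 * k + 1)‖) ∧
        HasSum (fun k : ℕ => ((-1) ^ k * (c k : ℂ)) * ((Real.tanh K : ℝ) : ℂ) ^ (2 * k + 1))
          (a ((Real.tanh K : ℝ) : ℂ))) := by
  obtain ⟨A, B, C, hc, hsum⟩ : ∃ A B C : ℝ, (∀ k, 0 ≤ partialFractionCoeff A B C k) ∧
      ∀ t : ℂ, (1 + t ^ 2) * (1 + 6 * t ^ 2 + t ^ 4) * (1 + 14 * t ^ 2 + t ^ 4) ≠ 0 →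
        a t = partialFractionSum A B C t := by
    rcases ha with rfl | rfl | rfl
    · exact ⟨1 / 3, 1 / 2, 1 / 6, partialFractionCoeff_nonneg (by norm_num) (by norm_num)
        (by norm_num), fun t => a1C_eq_partialFractionSum⟩
    · exact ⟨-1 / 6, 0, 1 / 6, partialFractionCoeff_nonneg le_rfl (by norm_num) (by norm_num),
        fun t => a3C_eq_partialFractionSum⟩
    · exact ⟨1 / 3, -1 / 2, 1 / 6, partialFractionCoeff_a5C_nonneg,
        fun t => a5C_eq_partialFractionSum⟩
  -- in the finite-dimensional space `ℂ`, summability already implies absolute summability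
  have habs (t : ℂ) (ht : ‖t‖ < 2 - √3) :
      Summable (‖altOddTerm (partialFractionCoeff A B C) t ·‖) ∧
        HasSum (altOddTerm (partialFractionCoeff A B C) t) (a t) := by
    have hseries := hsum t (denominator_ne_zero ht) ▸ hasSum_partialFraction A B C ht
    exact ⟨hseries.summable.norm, hseries⟩
  exact ⟨arctan_two_sub_sqrt_three, partialFractionCoeff A B C, hc, habs,
    fun K hK => habs _ (norm_tanh_lt hK)⟩
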